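/- arXiv:1007.0513 — 3 statements merged into one kernel-verified Lean document; each statement's English description precedes it below -/
import Mathlib

section
/- Let (g, B) be a metric n-Lie algebra and I a non-degenerate abelian ideal of g. Then I is contained in the center C(g). -/
open Function Submodule

/-- The orthogonal complement of a subspace `W` with respect to a bilinear form `B`. -/
def orthB {g : Type*} [AddCommGroup g] [Module ℂ g]
    (B : g →ₗ[ℂ] g →ₗ[ℂ] ℂ) (W : Submodule ℂ g) : Submodule ℂ g where
  carrier := {x | ∀ w ∈ W, B w x = 0}
  add_mem' := by
    intro a b ha hb w hw
    simp [ha w hw, hb w hw]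
  zero_mem' := by
    intro w hw; simp
  smul_mem' := by
    intro c a ha w hw
    simp [ha w hw]

/-- A metric `n`-Lie algebra over `ℂ`. -/
structure MetricNLie (n : ℕ) [NeZero n] (g : Type*) [AddCommGroup g] [Module ℂ g]
    [FiniteDimensional ℂ g] where
  br : MultilinearMap ℂ (fun _ : Fin n => g) g
  alternating : ∀ (x : Fin n → g) (i j : Fin n), i ≠ j → x i = x j → br x = 0
  fund : ∀ x y : Fin n → g,
    br (update y 0 (br x)) = ∑ i, br (update x i (br (update y 0 (x i))))
  B : g →ₗ[ℂ] g →ₗ[ℂ] ℂ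
  symm : ∀ a b, B a b = B b a
  nondeg : ∀ a, (∀ b, B a b = 0) → a = 0
  inv : ∀ (x : Fin n → g) (a b : g),
    B (br (update x 0 a)) b = - B (br (update x 0 b)) a

namespace MetricNLie

variable {n : ℕ} [NeZero n] {g : Type*} [AddCommGroup g] [Module ℂ g]
  [FiniteDimensional ℂ g] (M : MetricNLie n g)

/-- The center `C(g) = {x | [x, g, ..., g] = 0}`. -/
def center : Submodule ℂ g where
  carrier := {x | ∀ y : Fin n → g, M.br (update y 0 x) = 0}
  add_mem' := by
    intro a b ha hb y
    rw [M.br.map_update_add, ha y, hb y, add_zero]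
  zero_mem' := by
    intro y
    exact M.br.map_coord_zero 0 (by simp)
  smul_mem' := by
    intro c a ha y
    rw [M.br.map_update_smul, ha y, smul_zero]

/-- The derived algebra `g¹ = [g, ..., g]`, the span of all brackets. -/
def derived : Submodule ℂ g := Submodule.span ℂ (Set.range M.br)

/-- A subspace `I` is an ideal if `[I, g, ..., g] ⊆ I`. -/
def IsIdeal (I : Submodule ℂ g) : Prop :=
  ∀ (y : Fin n → g) (v : g), v ∈ I → M.br (update y 0 v) ∈ I

/-- A subspace `I` is a subalgebra if it is closed under the bracket. -/
def IsSubalgebra (I : Submodule ℂ g) : Prop :=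
  ∀ y : Fin n → g, (∀ i, y i ∈ I) → M.br y ∈ I

/-- A subspace `W` is isotropic if `B(W, W) = 0`. -/
def Isotropic (W : Submodule ℂ g) : Prop :=
  ∀ x ∈ W, ∀ y ∈ W, M.B x y = 0

/-- The centralizer `C_g(W) = {x | [x, W, g, ..., g] = 0}` of a subspace `W`. -/
def centralizer (W : Submodule ℂ g) : Set g :=
  {x | ∀ (y : Fin n → g) (w : g), w ∈ W → M.br (update (update y 0 x) 1 w) = 0}

/-- The subspace `[I, g, ..., g]`, spanned by brackets with one entry in `I`. -/
def bracketIdeal (I : Submodule ℂ g) : Submodule ℂ g :=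
  Submodule.span ℂ {z | ∃ (y : Fin n → g) (v : g), v ∈ I ∧ z = M.br (update y 0 v)}

/-- The subspace `[I, ..., I]`, spanned by brackets with all entries in `I`. -/
def bracketAll (I : Submodule ℂ g) : Submodule ℂ g :=
  Submodule.span ℂ {z | ∃ y : Fin n → g, (∀ i, y i ∈ I) ∧ z = M.br y}

/-- The derived series `I⁽⁰⁾ = I`, `I⁽ˢ⁺¹⁾ = [I⁽ˢ⁾, ..., I⁽ˢ⁾]` of a subspace `I`. -/
def derivedSeries (I : Submodule ℂ g) : ℕ → Submodule ℂ g
  | 0 => I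
  | s + 1 => M.bracketAll (derivedSeries I s)

/-- An ideal `I` is solvable if its derived series terminates at `0`. -/
def IsSolvable (I : Submodule ℂ g) : Prop :=
  ∃ r : ℕ, M.derivedSeries I r = ⊥

/-- `r` is the solvable radical: the maximal solvable ideal. -/
def IsRadical (r : Submodule ℂ g) : Prop :=
  M.IsIdeal r ∧ M.IsSolvable r ∧ ∀ I : Submodule ℂ g, M.IsIdeal I → M.IsSolvable I → I ≤ r

/-- An ideal `I` is abelian if `[I, I, g, ..., g] = 0`. -/
def IsAbelian (I : Submodule ℂ g) : Prop :=
  ∀ (y : Fin n → g) (v w : g), v ∈ I → w ∈ I → M.br (update (update y 0 v) 1 w) = 0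

end MetricNLie

/-
For `v ∈ I` the bracket `z = [v, y₁, y₂, …]` lies in `I`. Antisymmetry followed by
invariance of `B` gives `B(z, w) = B([w, v, y₂, …], y₁)` for every `w`, and for `w ∈ I` the right
side vanishes because `I` is abelian. So `z ∈ I ∩ I⊥ = 0`, i.e. `v` is central.
-/

namespace MetricNLie

variable {n : ℕ} [NeZero n] {g : Type*} [AddCommGroup g] [Module ℂ g]
  [FiniteDimensional ℂ g] (M : MetricNLie n g)

def brAlternating : g [⋀^Fin n]→ₗ[ℂ] g :=
  { M.br with map_eq_zero_of_eq' := fun x i j hx hij => M.alternating x i j hij hx }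

theorem br_update_zero_eq_neg (h01 : (0 : Fin n) ≠ 1) (y : Fin n → g) (v : g) :
    M.br (update y 0 v) = -M.br (update (update y 1 v) 0 (y 1)) := by
  have hswap := M.brAlternating.map_swap (update y 0 v) h01
  rw [Equiv.comp_swap_eq_update, update_self, update_of_ne h01.symm, update_comm h01,
    update_idem] at hswap
  exact neg_eq_iff_eq_neg.mp hswap.symm

theorem B_br_update_zero (h01 : (0 : Fin n) ≠ 1) (y : Fin n → g) (v w : g) :
    M.B (M.br (update y 0 v)) w = M.B (M.br (update (update y 0 w) 1 v)) (y 1) := by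
  rw [M.br_update_zero_eq_neg h01, map_neg, LinearMap.neg_apply, M.inv, neg_neg,
    update_comm h01]

theorem br_mem_orthB_of_isAbelian (h01 : (0 : Fin n) ≠ 1) {I : Submodule ℂ g}
    (hab : M.IsAbelian I) (y : Fin n → g) {v : g} (hv : v ∈ I) :
    M.br (update y 0 v) ∈ orthB M.B I := fun w hw => by
  rw [M.symm, M.B_br_update_zero h01, hab y w v hw hv, map_zero, LinearMap.zero_apply]

end MetricNLie

theorem nondeg_abelian_ideal_le_center {n : ℕ} [NeZero n] {g : Type*} [AddCommGroup g] [Module ℂ g]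
    [FiniteDimensional ℂ g] (M : MetricNLie n g) (hn : 2 ≤ n)
    (I : Submodule ℂ g) (hI : M.IsIdeal I) (hab : M.IsAbelian I)
    (hnd : I ⊓ orthB M.B I = ⊥) :
    I ≤ M.center := by
  intro v hv y
  have h01 : (0 : Fin n) ≠ 1 := by simp [Fin.ext_iff, Nat.mod_eq_of_lt hn]
  have hmem : M.br (update y 0 v) ∈ I ⊓ orthB M.B I :=
    ⟨hI y v hv, M.br_mem_orthB_of_isAbelian h01 hab y hv⟩
  rwa [hnd, Submodule.mem_bot] at hmem
end

section
/- Let (g, B) be a metric n-Lie algebra. Then g decomposes as an orthogonal direct sum of ideals g = C₁ ⊕ g₁, where C₁ is either zero or a non-degenerate abelian ideal contained in the center, and g₁ is an ideal whose center is isotropic. -/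
/-
Let `Z` be the center and `R = Z ∩ Z^⊥` the radical of `B` on `Z`. Any complement `C₁` of `R`
inside `Z` is non-degenerate, so `g = C₁ ⊕ C₁^⊥`; both summands are ideals because `C₁` is central
and `B` is invariant. A central element of `C₁^⊥` is orthogonal to `C₁` and to `R`, hence to all
of `Z = R + C₁`, so it lies in `R`, which is isotropic.
-/

open Function Submodule

section orthB

variable {V : Type*} [AddCommGroup V] [Module ℂ V] {B : V →ₗ[ℂ] V →ₗ[ℂ] ℂ}

theorem orthB_eq_orthogonal (B : V →ₗ[ℂ] V →ₗ[ℂ] ℂ) (W : Submodule ℂ V) :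
    orthB B W = LinearMap.BilinForm.orthogonal B W :=
  rfl

theorem inf_orthB_le_of_sup_eq (hB : B.IsRefl) {Z R C : Submodule ℂ V}
    (hR : R ≤ orthB B Z) (hsup : R ⊔ C = Z) : Z ⊓ orthB B C ≤ orthB B Z := by
  rintro x ⟨hxZ, hxC⟩ z hz
  rw [← hsup] at hz
  obtain ⟨r, hr, c, hc, rfl⟩ := mem_sup.1 hz
  rw [map_add, LinearMap.add_apply, hB _ _ (hR hr x hxZ), hxC c hc, add_zero]

theorem isCompl_orthB_of_inf_eq_bot [FiniteDimensional ℂ V] (hB : B.IsRefl)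
    {C : Submodule ℂ V} (hC : C ⊓ orthB B C = ⊥) : IsCompl C (orthB B C) := by
  rw [orthB_eq_orthogonal, LinearMap.BilinForm.isCompl_orthogonal_iff_disjoint hB, disjoint_iff]
  exact hC

end orthB

namespace MetricNLie

variable {n : ℕ} [NeZero n] {g : Type*} [AddCommGroup g] [Module ℂ g]
  [FiniteDimensional ℂ g] (M : MetricNLie n g)

theorem isRefl_B : M.B.IsRefl := fun a b h => by rwa [M.symm]

theorem br_eq_zero_of_apply_zero_mem_center {x : Fin n → g} (hx : x 0 ∈ M.center) :
    M.br x = 0 := by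
  simpa using hx x

variable {M}

theorem isIdeal_of_le_center {I : Submodule ℂ g} (hI : I ≤ M.center) : M.IsIdeal I := by
  intro y v hv
  rw [hI hv y]
  exact zero_mem I

theorem isAbelian_of_le_center {I : Submodule ℂ g} (hI : I ≤ M.center) : M.IsAbelian I := by
  intro _ v w hv hw
  apply M.br_eq_zero_of_apply_zero_mem_center
  rw [update_apply]
  split_ifs
  exacts [hI hw, hI (by simpa using hv)]

theorem IsIdeal.orthB {I : Submodule ℂ g} (hI : M.IsIdeal I) : M.IsIdeal (orthB M.B I) := by
  intro y v hv w hw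
  rw [M.symm, M.inv, hv _ (hI y w hw), neg_zero]

theorem isotropic_of_le_inf_orthB {W Z : Submodule ℂ g} (hW : W ≤ Z ⊓ orthB M.B Z) :
    M.Isotropic W := fun x hx _ hy => (hW hy).2 x (hW hx).1

end MetricNLie

theorem orthogonal_decomposition_isotropic_center_general {n : ℕ} [NeZero n] {g : Type*} [AddCommGroup g] [Module ℂ g]
    [FiniteDimensional ℂ g] (M : MetricNLie n g) :
    ∃ C₁ g₁ : Submodule ℂ g, M.IsIdeal C₁ ∧ M.IsIdeal g₁ ∧ IsCompl C₁ g₁ ∧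
      (∀ x ∈ C₁, ∀ y ∈ g₁, M.B x y = 0) ∧
      (C₁ = ⊥ ∨ (C₁ ⊓ orthB M.B C₁ = ⊥ ∧ M.IsAbelian C₁ ∧ C₁ ≤ M.center)) ∧
      M.Isotropic (M.center ⊓ g₁) := by
  set Z := M.center
  obtain ⟨C₁, hdisj, hsup⟩ :=
    IsModularLattice.exists_disjoint_and_sup_eq (inf_le_left : Z ⊓ orthB M.B Z ≤ Z)
  have hC₁Z : C₁ ≤ Z := hsup ▸ le_sup_right
  have hrad : Z ⊓ orthB M.B C₁ ≤ Z ⊓ orthB M.B Z :=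
    le_inf inf_le_left (inf_orthB_le_of_sup_eq M.isRefl_B inf_le_right hsup)
  have hnd : C₁ ⊓ orthB M.B C₁ = ⊥ :=
    eq_bot_iff.2 fun x hx => hdisj.le_bot ⟨hrad ⟨hC₁Z hx.1, hx.2⟩, hx.1⟩
  have hC₁ : M.IsIdeal C₁ := MetricNLie.isIdeal_of_le_center hC₁Z
  exact ⟨C₁, orthB M.B C₁, hC₁, hC₁.orthB, isCompl_orthB_of_inf_eq_bot M.isRefl_B hnd,
    fun x hx y hy => hy x hx, Or.inr ⟨hnd, MetricNLie.isAbelian_of_le_center hC₁Z, hC₁Z⟩,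
    MetricNLie.isotropic_of_le_inf_orthB hrad⟩

theorem orthogonal_decomposition_isotropic_center {n : ℕ} [NeZero n] {g : Type*} [AddCommGroup g] [Module ℂ g]
    [FiniteDimensional ℂ g] (M : MetricNLie n g) (hn : 2 ≤ n) :
    ∃ C₁ g₁ : Submodule ℂ g, M.IsIdeal C₁ ∧ M.IsIdeal g₁ ∧ IsCompl C₁ g₁ ∧
      (∀ x ∈ C₁, ∀ y ∈ g₁, M.B x y = 0) ∧
      (C₁ = ⊥ ∨ (C₁ ⊓ orthB M.B C₁ = ⊥ ∧ M.IsAbelian C₁ ∧ C₁ ≤ M.center)) ∧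
      M.Isotropic (M.center ⊓ g₁) :=
  orthogonal_decomposition_isotropic_center_general M
end

section
/- Let g be an n-Lie algebra over ℂ of dimension n+k with 2 ≤ k ≤ n+1, possessing a non-degenerate symmetric invariant bilinear form B. If r is a solvable ideal of g of dimension n with [r, ..., r] ≠ 0 and [r, s, g, ..., g] = 0 for the complementary semisimple part s, then one derives a contradiction with the non-degeneracy of B; in particular, there is no basis e₁,...,eₙ of such an r with [e₁,...,eₙ] = e₁. -/
open Function Submodule

/-! Write `b ∈ g` as `a + c` with `a ∈ r = span {e₁, …, eₙ}` and `c ∈ s`. Alternation kills every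
`[eᵢ, e₂, …, eₙ]` with `i ≠ 1`, and `[c, e₂, …, eₙ] = -[e₂, c, e₃, …, eₙ] = 0`, so
`[b, e₂, …, eₙ] ∈ ℂ e₁`. Invariance gives `B(e₁, e₁) = B([e₁, …, eₙ], e₁) = 0` and then
`B(e₁, b) = B([e₁, …, eₙ], b) = -B([b, e₂, …, eₙ], e₁) = 0` for all `b`, so `e₁ = 0` by
non-degeneracy. -/

theorem AlternatingMap.map_update_update_swap {R M N ι : Type*} [CommSemiring R]
    [AddCommGroup M] [Module R M] [AddCommGroup N] [Module R N] [DecidableEq ι]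
    (f : M [⋀^ι]→ₗ[R] N) (v : ι → M) {i j : ι} (hij : i ≠ j) (a b : M) :
    f (update (update v i a) j b) = -f (update (update v i b) j a) := by
  rw [← f.map_swap _ hij]
  congr 1
  ext k
  rcases eq_or_ne k i with rfl | hki
  · simp [update_of_ne hij]
  rcases eq_or_ne k j with rfl | hkj
  · simp [update_of_ne hij]
  · simp [Equiv.swap_apply_of_ne_of_ne hki hkj, update_of_ne hki, update_of_ne hkj]

theorem AlternatingMap.map_update_mem_span_singleton {R M N ι : Type*} [CommSemiring R]
    [AddCommMonoid M] [Module R M] [AddCommMonoid N] [Module R N] [DecidableEq ι]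
    (f : M [⋀^ι]→ₗ[R] N) (e : ι → M) (i : ι) {a : M} (ha : a ∈ span R (Set.range e)) :
    f (update e i a) ∈ span R {f e} := by
  suffices span R (Set.range e) ≤ (span R {f e}).comap (f.toMultilinearMap.toLinearMap e i) from
    this ha
  refine span_le.mpr (Set.range_subset_iff.mpr fun j => ?_)
  rcases eq_or_ne j i with rfl | hji
  · simp [mem_span_singleton_self]
  · simp [f.map_update_self e hji.symm]

namespace MetricNLie

variable {n : ℕ} [NeZero n] {g : Type*} [AddCommGroup g] [Module ℂ g]
  [FiniteDimensional ℂ g] (M : MetricNLie n g)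

def toAlternatingMap : g [⋀^Fin n]→ₗ[ℂ] g :=
  { M.br with map_eq_zero_of_eq' := fun x i j hx hij => M.alternating x i j hij hx }

@[simp]
theorem toAlternatingMap_apply (x : Fin n → g) : M.toAlternatingMap x = M.br x := rfl

theorem B_br_update_self (x : Fin n → g) (a : g) : M.B (M.br (update x 0 a)) a = 0 := by
  have := M.inv x a a
  linear_combination this / 2

theorem eq_zero_of_br_eq_self {e : Fin n → g} (he : M.br e = e 0)
    (hmem : ∀ b, M.br (update e 0 b) ∈ span ℂ {e 0}) : e 0 = 0 := by
  refine M.nondeg _ fun b => ?_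
  obtain ⟨t, ht⟩ := mem_span_singleton.mp (hmem b)
  have hself : M.B (e 0) (e 0) = 0 := by
    simpa [he] using M.B_br_update_self e (e 0)
  calc M.B (e 0) b = M.B (M.br (update e 0 (e 0))) b := by rw [update_eq_self, he]
    _ = -M.B (M.br (update e 0 b)) (e 0) := M.inv e (e 0) b
    _ = 0 := by rw [← ht, map_smul, LinearMap.smul_apply, hself, smul_zero, neg_zero]

theorem br_update_eq_zero_of_mem {r s : Submodule ℂ g}
    (hrsg : ∀ (y : Fin n → g) (a b : g), a ∈ r → b ∈ s → M.br (update (update y 0 a) 1 b) = 0)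
    (h01 : (0 : Fin n) ≠ 1) {x : Fin n → g} (hx : x 1 ∈ r) {c : g} (hc : c ∈ s) :
    M.br (update x 0 c) = 0 := by
  have hupd : update (update x 0 c) 1 (x 1) = update x 0 c := by
    rw [update_eq_self_iff, update_of_ne h01.symm]
  rw [← hupd, ← M.toAlternatingMap_apply, M.toAlternatingMap.map_update_update_swap _ h01,
    M.toAlternatingMap_apply, hrsg x (x 1) c hx hc, neg_zero]

end MetricNLie

theorem no_basis_with_bracket_first_general {n : ℕ} [NeZero n] {g : Type*} [AddCommGroup g] [Module ℂ g]
    [FiniteDimensional ℂ g] (M : MetricNLie n g) (hn : 2 ≤ n)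
    (r s : Submodule ℂ g)
    (hcompl : IsCompl r s)
    (hrsg : ∀ (y : Fin n → g) (a b : g), a ∈ r → b ∈ s →
      M.br (update (update y 0 a) 1 b) = 0) :
    ¬ ∃ e : Fin n → g, LinearIndependent ℂ e ∧
      Submodule.span ℂ (Set.range e) = r ∧ M.br e = e 0 := by
  rintro ⟨e, hli, hspan, hbr⟩
  have h01 : (0 : Fin n) ≠ 1 := by
    rw [Ne, Fin.ext_iff, Fin.val_zero, Fin.val_one', Nat.one_mod_eq_one.mpr (by omega)]
    exact zero_ne_one
  have hmem : ∀ b, M.br (update e 0 b) ∈ span ℂ {e 0} := by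
    intro b
    obtain ⟨a, ha, c, hc, rfl⟩ := mem_sup.mp (hcompl.sup_eq_top ▸ mem_top : b ∈ r ⊔ s)
    have he1 : e 1 ∈ r := hspan ▸ subset_span ⟨1, rfl⟩
    rw [M.br.map_update_add, M.br_update_eq_zero_of_mem hrsg h01 he1 hc, add_zero, ← hbr]
    exact M.toAlternatingMap.map_update_mem_span_singleton e 0 (hspan ▸ ha)
  exact hli.ne_zero 0 (M.eq_zero_of_br_eq_self hbr hmem)

theorem no_basis_with_bracket_first {n : ℕ} [NeZero n] {g : Type*} [AddCommGroup g] [Module ℂ g]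
    [FiniteDimensional ℂ g] (M : MetricNLie n g) (hn : 2 ≤ n)
    (k : ℕ) (hk2 : 2 ≤ k) (hkn : k ≤ n + 1)
    (hdim : Module.finrank ℂ g = n + k)
    (r s : Submodule ℂ g) (hrI : M.IsIdeal r) (hrs : M.IsSolvable r)
    (hrdim : Module.finrank ℂ r = n) (hr1 : M.bracketAll r ≠ ⊥)
    (hcompl : IsCompl r s)
    (hss : ∀ J : Submodule ℂ g, J ≤ s → M.IsIdeal J → M.IsSolvable J → J = ⊥)
    (hrsg : ∀ (y : Fin n → g) (a b : g), a ∈ r → b ∈ s →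
      M.br (update (update y 0 a) 1 b) = 0) :
    ¬ ∃ e : Fin n → g, LinearIndependent ℂ e ∧
      Submodule.span ℂ (Set.range e) = r ∧ M.br e = e 0 :=
  no_basis_with_bracket_first_general M hn r s hcompl hrsg
end
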